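/- Let φ ∈ C(ℝ,X) be uniformly comparable by character of recurrence with ψ ∈ C(ℝ,Y). If ψ is Birkhoff recurrent, then φ is Birkhoff recurrent. -/

import Mathlib

open Filter Topology

/-- The Bebutov metric on `C(ℝ, X)`:
`d(φ₁,φ₂) = sup_{T>0} min ( max_{|t| ≤ T} ρ(φ₁(t), φ₂(t)), 1/T )`. -/
noncomputable def bebutovDist {X : Type*} [MetricSpace X] (φ ψ : C(ℝ, X)) : ℝ :=
  ⨆ T : Set.Ioi (0 : ℝ),
    min (⨆ t : Set.Icc (-(T : ℝ)) (T : ℝ), dist (φ t.1) (ψ t.1)) (1 / (T : ℝ))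

/-- The translate `φ^h` of `φ ∈ C(ℝ,X)`, given by `φ^h(t) = φ(t + h)`. -/
def timeShift {X : Type*} [MetricSpace X] (φ : C(ℝ, X)) (h : ℝ) : C(ℝ, X) :=
  ⟨fun t => φ (t + h), φ.continuous.comp (continuous_id.add continuous_const)⟩

/-- `𝔑_φ`: the family of sequences `{tₙ} ⊂ ℝ` with `φ^{tₙ} → φ` in `(C(ℝ,X),d)`. -/
def NClass {X : Type*} [MetricSpace X] (φ : C(ℝ, X)) : Set (ℕ → ℝ) :=
  {t | Tendsto (fun n => bebutovDist (timeShift φ (t n)) φ) atTop (𝓝 0)}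

/-- `𝔐_φ`: the family of sequences `{tₙ} ⊂ ℝ` such that `{φ^{tₙ}}` converges in
`(C(ℝ,X),d)`. -/
def MClass {X : Type*} [MetricSpace X] (φ : C(ℝ, X)) : Set (ℕ → ℝ) :=
  {t | ∃ ψ : C(ℝ, X), Tendsto (fun n => bebutovDist (timeShift φ (t n)) ψ) atTop (𝓝 0)}

/-- `𝔑^u_φ`: sequences in `𝔑_φ` with `φ^{s+tₙ} → φ^s` uniformly in `s ∈ ℝ`. -/
def NuClass {X : Type*} [MetricSpace X] (φ : C(ℝ, X)) : Set (ℕ → ℝ) :=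
  {t | t ∈ NClass φ ∧ ∀ ε > (0 : ℝ), ∃ N : ℕ, ∀ n ≥ N, ∀ s : ℝ,
    bebutovDist (timeShift φ (s + t n)) (timeShift φ s) < ε}

/-- `𝔐^u_φ`: sequences in `𝔐_φ` such that `{φ^{s+tₙ}}` converges uniformly in `s ∈ ℝ`. -/
def MuClass {X : Type*} [MetricSpace X] (φ : C(ℝ, X)) : Set (ℕ → ℝ) :=
  {t | t ∈ MClass φ ∧ ∃ ψ : ℝ → C(ℝ, X), ∀ ε > (0 : ℝ), ∃ N : ℕ, ∀ n ≥ N, ∀ s : ℝ,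
    bebutovDist (timeShift φ (s + t n)) (ψ s) < ε}

/-- A subset `S ⊆ ℝ` is relatively dense if some length `l > 0` interval always meets it. -/
def RelativelyDense (S : Set ℝ) : Prop :=
  ∃ l > (0 : ℝ), ∀ a : ℝ, ∃ τ ∈ S, τ ∈ Set.Icc a (a + l)

/-- `φ` is Poisson stable: for every `ε > 0` and `l > 0` there are `ε`-shifts `τ₊ > l`
and `τ₋ < −l`. -/
def PoissonStable {X : Type*} [MetricSpace X] (φ : C(ℝ, X)) : Prop :=
  ∀ ε > (0 : ℝ), ∀ l > (0 : ℝ),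
    (∃ τ : ℝ, l < τ ∧ bebutovDist (timeShift φ τ) φ < ε) ∧
    (∃ τ : ℝ, τ < -l ∧ bebutovDist (timeShift φ τ) φ < ε)

/-- `φ` is almost recurrent in the sense of Bebutov. -/
def AlmostRecurrent {X : Type*} [MetricSpace X] (φ : C(ℝ, X)) : Prop :=
  ∀ ε > (0 : ℝ), RelativelyDense {τ : ℝ | bebutovDist (timeShift φ τ) φ < ε}

/-- `τ` is an `ε`-almost period of `φ`: `ρ(φ(t+τ),φ(t)) < ε` for all `t`. -/
def IsAlmostPeriod {X : Type*} [MetricSpace X] (φ : C(ℝ, X)) (ε τ : ℝ) : Prop :=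
  ∀ t : ℝ, dist (φ (t + τ)) (φ t) < ε

/-- `φ` is Bohr almost periodic: its set of `ε`-almost periods is relatively dense for
every `ε > 0`. -/
def BohrAlmostPeriodic {X : Type*} [MetricSpace X] (φ : C(ℝ, X)) : Prop :=
  ∀ ε > (0 : ℝ), RelativelyDense {τ : ℝ | IsAlmostPeriod φ ε τ}

/-- `φ` is Lagrange stable: every sequence of translates has a subsequence converging in
the Bebutov metric (i.e. `{φ^h : h ∈ ℝ}` is relatively compact in `(C(ℝ,X),d)`). -/
def LagrangeStable {X : Type*} [MetricSpace X] (φ : C(ℝ, X)) : Prop :=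
  ∀ h : ℕ → ℝ, ∃ (k : ℕ → ℕ) (ψ : C(ℝ, X)), StrictMono k ∧
    Tendsto (fun n => bebutovDist (timeShift φ (h (k n))) ψ) atTop (𝓝 0)

/-- `φ` is Birkhoff recurrent: almost recurrent and Lagrange stable. -/
def BirkhoffRecurrent {X : Type*} [MetricSpace X] (φ : C(ℝ, X)) : Prop :=
  AlmostRecurrent φ ∧ LagrangeStable φ

/-- `φ` is Levitan almost periodic. -/
def LevitanAlmostPeriodic {X : Type*} [MetricSpace X] (φ : C(ℝ, X)) : Prop :=
  ∃ (Z : Type) (_ : MetricSpace Z) (_ : CompleteSpace Z) (χ : C(ℝ, Z)),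
    BohrAlmostPeriodic χ ∧
    ∀ ε > (0 : ℝ), ∃ δ > (0 : ℝ), ∀ τ : ℝ, IsAlmostPeriod χ δ τ →
      bebutovDist (timeShift φ τ) φ < ε

/-- `φ` is quasi-periodic with the spectrum of frequencies `ν₁,…,ν_k`. -/
def QuasiPeriodic {X : Type*} [MetricSpace X] (φ : C(ℝ, X)) {k : ℕ} (ν : Fin k → ℝ) :
    Prop :=
  LinearIndependent ℚ ν ∧
  ∃ Φ : C((Fin k → ℝ), X),
    (∀ v : Fin k → ℝ, Φ (fun i => v i + 2 * Real.pi) = Φ v) ∧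
    ∀ t : ℝ, φ t = Φ (fun i => ν i * t)

/-- `φ` is pseudo-periodic: for every `ε > 0` and `l > 0` there exist `ε`-almost
periods `τ₊ > l` and `τ₋ < −l`. -/
def PseudoPeriodic {X : Type*} [MetricSpace X] (φ : C(ℝ, X)) : Prop :=
  ∀ ε > (0 : ℝ), ∀ l > (0 : ℝ),
    (∃ τ : ℝ, l < τ ∧ IsAlmostPeriod φ ε τ) ∧
    (∃ τ : ℝ, τ < -l ∧ IsAlmostPeriod φ ε τ)

/-- `φ` is pseudo-recurrent. -/
def PseudoRecurrent {X : Type*} [MetricSpace X] (φ : C(ℝ, X)) : Prop :=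
  ∀ ε > (0 : ℝ), ∀ l : ℝ, ∃ L : ℝ, l ≤ L ∧ ∀ τ₀ : ℝ, ∃ τ ∈ Set.Icc l L,
    ∀ t : ℝ, |t| ≤ 1 / ε → dist (φ (t + τ₀ + τ)) (φ (t + τ₀)) ≤ ε

/-
Interleaving a sequence `tₙ` with zeros shows that `𝔐_ψ ⊆ 𝔐_φ` forces `𝔑_ψ ⊆ 𝔑_φ`:
the translates `φ^{tₙ}` must converge to the limit of the constant subsequence `φ^0 = φ`.
Arguing by contradiction along `δ = 1/(n+1)`, `𝔑_ψ ⊆ 𝔑_φ` gives for each `ε > 0` a `δ > 0`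
such that every `δ`-shift of `ψ` is an `ε`-shift of `φ`, so relative density of the shifts passes
from `ψ` to `φ`.
Lagrange stability passes directly, since a convergent subsequence of translates of `ψ` is
indexed by a sequence in `𝔐_ψ ⊆ 𝔐_φ`.
-/

lemma min_add_le_min_add_min {α : Type*} [AddCommMonoid α] [LinearOrder α] [IsOrderedAddMonoid α]
    {a b c : α} (ha : 0 ≤ a) (hb : 0 ≤ b) (hc : 0 ≤ c) : min (a + b) c ≤ min a c + min b c := by
  rcases le_total a c with hac | hca
  · rcases le_total b c with hbc | hcb
    · rw [min_eq_left hac, min_eq_left hbc]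
      exact min_le_left _ _
    · rw [min_eq_right hcb]
      exact (min_le_right _ _).trans (le_add_of_nonneg_left (le_min ha hc))
  · rw [min_eq_right hca]
    exact (min_le_right _ _).trans (le_add_of_nonneg_right (le_min hb hc))

section Bebutov

variable {X : Type*} [MetricSpace X]

lemma bddAbove_range_dist_Icc (φ ψ : C(ℝ, X)) (a b : ℝ) :
    BddAbove (Set.range fun t : Set.Icc a b => dist (φ t) (ψ t)) :=
  (isCompact_range (by fun_prop)).bddAbove

lemma iSup_dist_Icc_nonneg (φ ψ : C(ℝ, X)) (a b : ℝ) :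
    0 ≤ ⨆ t : Set.Icc a b, dist (φ t) (ψ t) :=
  Real.iSup_nonneg fun _ => dist_nonneg

lemma bddAbove_range_bebutov (φ ψ : C(ℝ, X)) :
    BddAbove (Set.range fun T : Set.Ioi (0 : ℝ) =>
      min (⨆ t : Set.Icc (-(T : ℝ)) T, dist (φ t) (ψ t)) (1 / (T : ℝ))) := by
  refine ⟨max (⨆ t : Set.Icc (-1 : ℝ) 1, dist (φ t) (ψ t)) 1, ?_⟩
  rintro _ ⟨⟨T, hT₀ : 0 < T⟩, rfl⟩
  rcases le_total T 1 with hT | hT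
  · refine (min_le_left _ _).trans (le_max_of_le_left ?_)
    have : Nonempty (Set.Icc (-T) T) := ⟨⟨0, by simp [hT₀.le]⟩⟩
    exact ciSup_le fun t => le_ciSup_of_le (bddAbove_range_dist_Icc φ ψ _ _)
      ⟨t, by linarith [t.2.1], by linarith [t.2.2]⟩ le_rfl
  · exact (min_le_right _ _).trans (le_max_of_le_right ((div_le_one hT₀).2 hT))

lemma bebutovDist_nonneg (φ ψ : C(ℝ, X)) : 0 ≤ bebutovDist φ ψ :=
  Real.iSup_nonneg fun T => le_min (iSup_dist_Icc_nonneg φ ψ _ _) (one_div_nonneg.2 T.2.le)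

lemma bebutovDist_self (φ : C(ℝ, X)) : bebutovDist φ φ = 0 :=
  le_antisymm (ciSup_le fun _ => (min_le_left _ _).trans (by simp)) (bebutovDist_nonneg φ φ)

lemma bebutovDist_comm (φ ψ : C(ℝ, X)) : bebutovDist φ ψ = bebutovDist ψ φ := by
  simp only [bebutovDist, dist_comm]

lemma bebutovDist_triangle (φ ψ χ : C(ℝ, X)) :
    bebutovDist φ χ ≤ bebutovDist φ ψ + bebutovDist ψ χ := by
  refine ciSup_le fun T => ?_
  have hT₀ : (0 : ℝ) < T := T.2
  have : Nonempty (Set.Icc (-(T : ℝ)) T) := ⟨⟨0, by simp [hT₀.le]⟩⟩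
  have hsup : (⨆ t : Set.Icc (-(T : ℝ)) T, dist (φ t) (χ t)) ≤
      (⨆ t : Set.Icc (-(T : ℝ)) T, dist (φ t) (ψ t)) +
        ⨆ t : Set.Icc (-(T : ℝ)) T, dist (ψ t) (χ t) :=
    ciSup_le fun t => (dist_triangle _ _ _).trans <| add_le_add
      (le_ciSup (bddAbove_range_dist_Icc φ ψ _ _) t) (le_ciSup (bddAbove_range_dist_Icc ψ χ _ _) t)
  calc _ ≤ min ((⨆ t : Set.Icc (-(T : ℝ)) T, dist (φ t) (ψ t)) +
          ⨆ t : Set.Icc (-(T : ℝ)) T, dist (ψ t) (χ t)) (1 / (T : ℝ)) :=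
        min_le_min_right _ hsup
    _ ≤ _ := min_add_le_min_add_min (iSup_dist_Icc_nonneg _ _ _ _)
        (iSup_dist_Icc_nonneg _ _ _ _) (by positivity)
    _ ≤ _ := add_le_add (le_ciSup (bddAbove_range_bebutov φ ψ) T)
        (le_ciSup (bddAbove_range_bebutov ψ χ) T)

@[simp]
lemma timeShift_zero (φ : C(ℝ, X)) : timeShift φ 0 = φ := by
  ext t
  simp [timeShift]

end Bebutov

section Comparability

variable {X Y : Type*} [MetricSpace X] [MetricSpace Y] {φ : C(ℝ, X)} {ψ : C(ℝ, Y)}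

lemma nClass_subset_of_mClass_subset (h : MClass ψ ⊆ MClass φ) : NClass ψ ⊆ NClass φ := by
  intro r hr
  set u : ℕ → ℝ := fun n => if Even n then r (n / 2) else 0
  have hu_even (n : ℕ) : u (2 * n) = r n := by simp [u]
  have hu_odd (n : ℕ) : u (2 * n + 1) = 0 := by simp [u]
  have hu : u ∈ MClass ψ := by
    refine ⟨ψ, squeeze_zero (fun _ => bebutovDist_nonneg _ _) (fun n => ?_)
      (hr.comp (Nat.tendsto_div_const_atTop two_ne_zero))⟩
    by_cases hn : Even n
    · simp [u, hn]
    · simp [u, hn, bebutovDist_self, bebutovDist_nonneg]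
  obtain ⟨χ, hχ⟩ := h hu
  have h_double : Tendsto (fun n : ℕ => 2 * n) atTop atTop := tendsto_id.const_mul_atTop' two_pos
  have hφχ : bebutovDist φ χ = 0 := by
    have := hχ.comp ((tendsto_add_atTop_nat 1).comp h_double)
    simp only [Function.comp_def, hu_odd, timeShift_zero] at this
    exact tendsto_nhds_unique tendsto_const_nhds this
  have hrχ : Tendsto (fun n => bebutovDist (timeShift φ (r n)) χ) atTop (𝓝 0) := by
    simpa only [Function.comp_def, hu_even] using hχ.comp h_double
  refine squeeze_zero (fun _ => bebutovDist_nonneg _ _) (fun n => ?_) hrχ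
  simpa [bebutovDist_comm χ φ, hφχ] using bebutovDist_triangle (timeShift φ (r n)) χ φ

lemma exists_bebutovDist_lt_of_nClass_subset (h : NClass ψ ⊆ NClass φ) {ε : ℝ} (hε : 0 < ε) :
    ∃ δ > 0, ∀ τ, bebutovDist (timeShift ψ τ) ψ < δ → bebutovDist (timeShift φ τ) φ < ε := by
  by_contra! hbad
  choose r hrψ hrφ using fun n : ℕ => hbad (1 / ((n : ℝ) + 1)) Nat.one_div_pos_of_nat
  have hr : r ∈ NClass ψ := squeeze_zero (fun _ => bebutovDist_nonneg _ _) (fun n => (hrψ n).le)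
    tendsto_one_div_add_atTop_nhds_zero_nat
  obtain ⟨n, hn⟩ := ((h hr).eventually (gt_mem_nhds hε)).exists
  exact (hrφ n).not_gt hn

lemma RelativelyDense.mono {S T : Set ℝ} (hS : RelativelyDense S) (hST : S ⊆ T) :
    RelativelyDense T := by
  obtain ⟨l, hl, hS⟩ := hS
  refine ⟨l, hl, fun a => ?_⟩
  obtain ⟨τ, hτS, hτ⟩ := hS a
  exact ⟨τ, hST hτS, hτ⟩

lemma AlmostRecurrent.of_nClass_subset (hψ : AlmostRecurrent ψ) (h : NClass ψ ⊆ NClass φ) :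
    AlmostRecurrent φ := fun _ hε =>
  let ⟨δ, hδ, hδε⟩ := exists_bebutovDist_lt_of_nClass_subset h hε
  (hψ δ hδ).mono hδε

lemma LagrangeStable.of_mClass_subset (hψ : LagrangeStable ψ) (h : MClass ψ ⊆ MClass φ) :
    LagrangeStable φ := fun t =>
  let ⟨k, _, hk, hψk⟩ := hψ t
  let ⟨χ, hφk⟩ := h ⟨_, hψk⟩
  ⟨k, χ, hk, hφk⟩

end Comparability

theorem birkhoffRecurrent_of_uniformly_comparable_general
    {X Y : Type*} [MetricSpace X] [MetricSpace Y]
    (φ : C(ℝ, X)) (ψ : C(ℝ, Y)) (h : MClass ψ ⊆ MClass φ)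
    (hψ : BirkhoffRecurrent ψ) : BirkhoffRecurrent φ :=
  ⟨hψ.1.of_nClass_subset (nClass_subset_of_mClass_subset h), hψ.2.of_mClass_subset h⟩

/-- If `φ` is uniformly comparable by character of recurrence with `ψ` (`𝔐_ψ ⊆ 𝔐_φ`)
and `ψ` is Birkhoff recurrent, then so is `φ`. -/
theorem birkhoffRecurrent_of_uniformly_comparable
    {X Y : Type*} [MetricSpace X] [CompleteSpace X] [MetricSpace Y] [CompleteSpace Y]
    (φ : C(ℝ, X)) (ψ : C(ℝ, Y)) (h : MClass ψ ⊆ MClass φ)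
    (hψ : BirkhoffRecurrent ψ) : BirkhoffRecurrent φ :=
  birkhoffRecurrent_of_uniformly_comparable_general φ ψ h hψ
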